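/- arXiv:1106.3755 — 5 statements merged into one kernel-verified Lean document; each statement's English description precedes it below -/
import Mathlib

section
/- Let B be a linear operator on R^d with a unique simple leading eigenvalue λ = 1 (all other eigenvalues have modulus < 1), with right eigenvector v and left eigenvector v* normalized so that (v*, v) = 1. If an operator C satisfies |(v*, C v)| > 1, then for all sufficiently large r the operator B^r C has a real eigenvalue of modulus greater than 1; in particular ρ(B^r C) > 1. -/
/-!
Since `B v = v`, `v*ᵀ B = v*ᵀ` and `(v*, v) = 1`, the rank-one matrix `P = v v*ᵀ` is an idempotent
with `B P = P B = P`, so `B ^ (r + 1) = (B - P) ^ (r + 1) + P`. A nonzero eigenvalue of `B - P` has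
an eigenvector killed by `v*`, hence is an eigenvalue of `B`, and it cannot be `1` because `1` is a
simple root of the characteristic polynomial. By Gelfand's formula `(B - P) ^ r → 0`, so
`B ^ r C → P C = v (v*ᵀ C)`, whose characteristic polynomial `X ^ (d - 1) * (X - c)`,
`c = (v*, C v)`, is negative at `1` when `c > 1`. By continuity the characteristic polynomial of
`B ^ r C` is negative at `1` for large `r`, and being monic it has a real root beyond `1`.
The case `c < -1` follows by replacing `C` with `-C`.
-/

open Matrix Polynomial Filter Topology

theorem Polynomial.Monic.exists_isRoot_gt_of_eval_neg {p : ℝ[X]} (hp : p.Monic) {s : ℝ}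
    (hs : p.eval s < 0) : ∃ μ, s < μ ∧ p.IsRoot μ := by
  have hdeg : 0 < p.degree := by
    by_contra! h
    rw [hp.degree_le_zero_iff_eq_one.mp h, eval_one] at hs
    exact one_pos.not_gt hs
  obtain ⟨T, hT, hsT⟩ := ((p.tendsto_atTop_of_leadingCoeff_nonneg hdeg
    (by rw [hp.leadingCoeff]; exact zero_le_one)).eventually_ge_atTop 0 |>.and
    (eventually_ge_atTop s)).exists
  obtain ⟨μ, hμ, hroot⟩ := intermediate_value_Icc hsT p.continuousOn ⟨hs.le, hT⟩
  exact ⟨μ, hμ.1.lt_of_ne (by rintro rfl; exact hs.ne hroot), hroot⟩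

theorem sub_pow_succ_of_mul_eq {R : Type*} [Ring R] {b p : R} (hp : IsIdempotentElem p)
    (hbp : b * p = p) (hpb : p * b = p) (n : ℕ) : (b - p) ^ (n + 1) = b ^ (n + 1) - p := by
  have hpow (m : ℕ) : b ^ m * p = p := by
    induction m with
    | zero => simp
    | succ m ih => rw [pow_succ', mul_assoc, ih, hbp]
  induction n with
  | zero => simp
  | succ n ih =>
    rw [pow_succ, ih, sub_mul, mul_sub, mul_sub, ← pow_succ, hpow, hpb, hp.eq]
    abel

theorem spectrum.tendsto_pow_atTop_nhds_zero {A : Type*} [NormedRing A] [NormedAlgebra ℂ A]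
    [CompleteSpace A] {a : A} (ha : ∀ z ∈ spectrum ℂ a, ‖z‖ < 1) :
    Tendsto (a ^ ·) atTop (𝓝 0) := by
  nontriviality A
  have hρ : spectralRadius ℂ a < 1 := by
    simpa using spectrum.spectralRadius_lt_of_forall_lt a (r := 1) fun z hz => by
      simpa [← NNReal.coe_lt_coe] using ha z hz
  obtain ⟨c, hac, hc1⟩ := ENNReal.lt_iff_exists_nnreal_btwn.mp hρ
  have hbound : ∀ᶠ n : ℕ in atTop, ‖a ^ n‖₊ < c ^ n := by
    filter_upwards [(spectrum.pow_nnnorm_pow_one_div_tendsto_nhds_spectralRadius a).eventually_lt_const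
      hac, eventually_gt_atTop 0] with n hn hn0
    rw [one_div, ENNReal.rpow_inv_lt_iff (by positivity), ENNReal.rpow_natCast] at hn
    exact_mod_cast hn
  refine squeeze_zero_norm' (hbound.mono fun n hn => ?_)
    (tendsto_pow_atTop_nhds_zero_of_lt_one c.coe_nonneg (by exact_mod_cast hc1))
  exact_mod_cast hn.le

namespace Matrix

variable {n : Type*} [Fintype n] [DecidableEq n]

theorem mem_spectrum_iff_exists_mulVec_eq_smul {K : Type*} [Field K] {A : Matrix n n K} {z : K} :
    z ∈ spectrum K A ↔ ∃ x ≠ 0, A *ᵥ x = z • x := by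
  rw [mem_spectrum_iff_isRoot_charpoly, ← charpoly_toLin',
    ← Module.End.hasEigenvalue_iff_isRoot_charpoly, Module.End.hasEigenvalue_iff,
    Submodule.ne_bot_iff]
  simp only [Module.End.mem_eigenspace_iff, toLin'_apply]
  exact exists_congr fun x => and_comm

theorem apply_mem_spectrum_map {K L : Type*} [Field K] [Field L] (f : K →+* L) {A : Matrix n n K}
    {μ : K} (h : μ ∈ spectrum K A) : f μ ∈ spectrum L (A.map f) := by
  rw [mem_spectrum_iff_isRoot_charpoly] at h ⊢
  rw [charpoly_map]
  exact h.map

theorem exists_smul_eq_of_rootMultiplicity_charpoly_le_one {K : Type*} [Field K]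
    {B : Matrix n n K} {μ : K} (hμ : B.charpoly.rootMultiplicity μ ≤ 1) {v x : n → K}
    (hv0 : v ≠ 0) (hv : B *ᵥ v = μ • v) (hx : B *ᵥ x = μ • x) : ∃ c : K, c • v = x := by
  set E := Module.End.eigenspace (toLin' B) μ
  have hvE : v ∈ E := Module.End.mem_eigenspace_iff.mpr hv
  have hxE : x ∈ E := Module.End.mem_eigenspace_iff.mpr hx
  have hE : Module.finrank K E = 1 := by
    refine le_antisymm ?_ (Submodule.one_le_finrank_iff.mpr ((Submodule.ne_bot_iff _).mpr
      ⟨v, hvE, hv0⟩))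
    calc Module.finrank K E ≤ (toLin' B).charpoly.rootMultiplicity μ :=
          LinearMap.finrank_eigenspace_le _ _
      _ ≤ 1 := by rwa [charpoly_toLin']
  obtain ⟨c, hc⟩ :=
    (finrank_eq_one_iff_of_nonzero' (⟨v, hvE⟩ : E) (by simpa using hv0)).mp hE ⟨x, hxE⟩
  exact ⟨c, congrArg Subtype.val hc⟩

theorem eq_zero_or_mem_spectrum_of_mem_spectrum_sub_vecMulVec {K : Type*} [Field K]
    {B : Matrix n n K} {v w : n → K} (hv : B *ᵥ v = v) (hw : w ᵥ* B = w) (hwv : w ⬝ᵥ v = 1)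
    (hsimple : B.charpoly.rootMultiplicity 1 ≤ 1) {z : K}
    (hz : z ∈ spectrum K (B - vecMulVec v w)) : z = 0 ∨ (z ∈ spectrum K B ∧ z ≠ 1) := by
  obtain ⟨x, hx0, hx⟩ := mem_spectrum_iff_exists_mulVec_eq_smul.mp hz
  have hwM : w ᵥ* (B - vecMulVec v w) = 0 := by
    rw [vecMul_sub, hw, vecMul_vecMulVec, hwv, one_smul, sub_self]
  have hzwx : z * (w ⬝ᵥ x) = 0 := by
    rw [← smul_eq_mul, ← dotProduct_smul, ← hx, dotProduct_mulVec, hwM, zero_dotProduct]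
  refine or_iff_not_imp_left.mpr fun hz0 => ?_
  have hwx : w ⬝ᵥ x = 0 := (mul_eq_zero.mp hzwx).resolve_left hz0
  have hBx : B *ᵥ x = z • x := by
    rwa [sub_mulVec, vecMulVec_mulVec, hwx, MulOpposite.op_zero, zero_smul, sub_zero] at hx
  refine ⟨mem_spectrum_iff_exists_mulVec_eq_smul.mpr ⟨x, hx0, hBx⟩, ?_⟩
  rintro rfl
  have hv0 : v ≠ 0 := by rintro rfl; simp at hwv
  obtain ⟨c, rfl⟩ := exists_smul_eq_of_rootMultiplicity_charpoly_le_one hsimple hv0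
    (by rw [hv, one_smul]) hBx
  rw [dotProduct_smul, hwv, smul_eq_mul, mul_one] at hwx
  simp [hwx] at hx0

open scoped Matrix.Norms.Operator in
theorem tendsto_pow_atTop_nhds_vecMulVec {B : Matrix n n ℂ} {v w : n → ℂ} (hv : B *ᵥ v = v)
    (hw : w ᵥ* B = w) (hwv : w ⬝ᵥ v = 1) (hsimple : B.charpoly.rootMultiplicity 1 ≤ 1)
    (hlead : ∀ z ∈ spectrum ℂ B, z ≠ 1 → ‖z‖ < 1) :
    Tendsto (B ^ ·) atTop (𝓝 (vecMulVec v w)) := by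
  have hsub : ∀ k : ℕ, (B - vecMulVec v w) ^ (k + 1) = B ^ (k + 1) - vecMulVec v w :=
    sub_pow_succ_of_mul_eq (by rw [IsIdempotentElem, vecMulVec_mul_vecMulVec, hwv, one_smul])
      (by rw [mul_vecMulVec, hv]) (by rw [vecMulVec_mul, hw])
  have hlim := spectrum.tendsto_pow_atTop_nhds_zero fun z hz => by
    rcases eq_zero_or_mem_spectrum_of_mem_spectrum_sub_vecMulVec hv hw hwv hsimple hz with
      rfl | ⟨hzB, hz1⟩
    · simp
    · exact hlead z hzB hz1
  rw [← zero_add (vecMulVec v w)]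
  refine (hlim.add_const (vecMulVec v w)).congr' ?_
  filter_upwards [eventually_gt_atTop 0] with k hk
  obtain ⟨k, rfl⟩ := Nat.exists_eq_add_of_lt hk
  simp [hsub]

theorem tendsto_pow_atTop_nhds_vecMulVec_of_map_ofReal {B : Matrix n n ℝ} {v w : n → ℝ}
    (hv : B *ᵥ v = v) (hw : w ᵥ* B = w) (hwv : w ⬝ᵥ v = 1)
    (hsimple : (B.map (Complex.ofReal ·)).charpoly.rootMultiplicity 1 ≤ 1)
    (hlead : ∀ z ∈ spectrum ℂ (B.map (Complex.ofReal ·)), z ≠ 1 → ‖z‖ < 1) :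
    Tendsto (B ^ ·) atTop (𝓝 (vecMulVec v w)) := by
  let f := Complex.ofRealHom
  have hlim := tendsto_pow_atTop_nhds_vecMulVec (v := f ∘ v) (w := f ∘ w)
    (funext fun i => (f.map_mulVec B v i).symm.trans (congrArg f (congrFun hv i)))
    (funext fun i => (f.map_vecMul B w i).symm.trans (congrArg f (congrFun hw i)))
    ((f.map_dotProduct w v).symm.trans (by rw [hwv, map_one])) hsimple hlead
  have hpow (k : ℕ) : B.map f ^ k = (B ^ k).map f := (map_pow f.mapMatrix B k).symm
  convert ((continuous_id.matrix_map Complex.continuous_re).tendsto _).comp hlim using 2 with k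
  · ext i j
    simp [hpow, f]
  · ext i j
    simp [f, vecMulVec_apply, ← Complex.ofReal_mul]

theorem eventually_exists_mem_spectrum_gt {ι : Type*} {l : Filter ι} {A : ι → Matrix n n ℝ}
    {u w : n → ℝ} (hA : Tendsto A l (𝓝 (vecMulVec u w))) {s : ℝ} (hs : 0 < s)
    (hsc : s < u ⬝ᵥ w) : ∀ᶠ i in l, ∃ μ, s < μ ∧ μ ∈ spectrum ℝ (A i) := by
  have hcont : Continuous fun M : Matrix n n ℝ => M.charpoly.eval s := by
    simp_rw [eval_charpoly]
    exact (continuous_const.sub continuous_id).matrix_det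
  have hlimit_neg : (vecMulVec u w).charpoly.eval s < 0 := by
    have : Nonempty n := by
      by_contra! h
      simp [dotProduct, Finset.univ_eq_empty] at hsc
      linarith
    obtain ⟨k, hk⟩ := Nat.exists_eq_succ_of_ne_zero (Fintype.card_ne_zero (α := n))
    rw [charpoly_vecMulVec, hk, Nat.succ_sub_one, eval_sub, eval_smul, eval_pow, eval_pow, eval_X,
      pow_succ, smul_eq_mul]
    nlinarith [pow_pos hs k]
  filter_upwards [((hcont.tendsto _).comp hA).eventually_lt_const hlimit_neg] with i hi
  obtain ⟨μ, hsμ, hroot⟩ := (charpoly_monic (A i)).exists_isRoot_gt_of_eval_neg hi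
  exact ⟨μ, hsμ, mem_spectrum_iff_isRoot_charpoly.mpr hroot⟩

theorem eventually_exists_mem_spectrum_abs_gt {ι : Type*} {l : Filter ι} {A : ι → Matrix n n ℝ}
    {u w : n → ℝ} (hA : Tendsto A l (𝓝 (vecMulVec u w))) {s : ℝ} (hs : 0 < s)
    (hsc : s < |u ⬝ᵥ w|) : ∀ᶠ i in l, ∃ μ, s < |μ| ∧ μ ∈ spectrum ℝ (A i) := by
  rcases lt_abs.mp hsc with hpos | hneg
  · filter_upwards [eventually_exists_mem_spectrum_gt hA hs hpos] with i ⟨μ, hμ, hmem⟩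
    exact ⟨μ, hμ.trans_le (le_abs_self μ), hmem⟩
  · have hA' : Tendsto (-A) l (𝓝 (vecMulVec (-u) w)) := by
      rw [neg_vecMulVec]
      exact hA.neg
    filter_upwards [eventually_exists_mem_spectrum_gt hA' hs (by rwa [neg_dotProduct])]
      with i ⟨μ, hμ, hmem⟩
    rw [Pi.neg_apply, ← spectrum.neg_eq] at hmem
    exact ⟨-μ, by rw [abs_neg]; exact hμ.trans_le (le_abs_self μ), hmem⟩

end Matrix

theorem eventually_spectral_radius_gt_one_general
    {d : ℕ} (B C : Matrix (Fin d) (Fin d) ℝ)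
    (v vstar : Fin d → ℝ)
    (hv : B.mulVec v = v)
    (hvstar : B.transpose.mulVec vstar = vstar)
    (hnormal : vstar ⬝ᵥ v = 1)
    (hlead : ∀ z ∈ spectrum ℂ (B.map (Complex.ofReal ·)), z ≠ 1 → ‖z‖ < 1)
    (hsimple : (Matrix.charpoly (B.map (Complex.ofReal ·))).rootMultiplicity 1 = 1)
    (hC : |vstar ⬝ᵥ C.mulVec v| > 1) :
    ∃ R : ℕ, ∀ r ≥ R, ∃ μ : ℝ,
      ((μ : ℂ) ∈ spectrum ℂ (((B ^ r * C).map (Complex.ofReal ·)))) ∧ 1 < |μ| := by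
  have hBr := tendsto_pow_atTop_nhds_vecMulVec_of_map_ofReal hv
    (by rwa [← mulVec_transpose]) hnormal hsimple.le hlead
  have hBrC : Tendsto (B ^ · * C) atTop (𝓝 (vecMulVec v (vstar ᵥ* C))) := by
    simpa only [vecMulVec_mul] using hBr.mul_const C
  have hc : 1 < |v ⬝ᵥ (vstar ᵥ* C)| := by rwa [dotProduct_comm, ← dotProduct_mulVec]
  obtain ⟨R, hR⟩ := eventually_atTop.mp (eventually_exists_mem_spectrum_abs_gt hBrC one_pos hc)
  exact ⟨R, fun r hr => (hR r hr).imp fun μ ⟨hμ, hmem⟩ =>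
    ⟨apply_mem_spectrum_map Complex.ofRealHom hmem, hμ⟩⟩

/-- let `B` have a unique simple leading eigenvalue `1` (all other complex
eigenvalues of modulus `< 1`), with right eigenvector `v` and left eigenvector `v*`
normalized by `(v*, v) = 1`.  If `|(v*, C v)| > 1` then, for all sufficiently large `r`,
the operator `B^r C` has a real eigenvalue of modulus greater than `1`;
in particular `ρ(B^r C) > 1`. -/
theorem eventually_spectral_radius_gt_one
    {d : ℕ} (B C : Matrix (Fin d) (Fin d) ℝ)
    (v vstar : Fin d → ℝ) (hv0 : v ≠ 0) (hvstar0 : vstar ≠ 0)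
    (hv : B.mulVec v = v)
    (hvstar : B.transpose.mulVec vstar = vstar)
    (hnormal : vstar ⬝ᵥ v = 1)
    (hlead : ∀ z ∈ spectrum ℂ (B.map (Complex.ofReal ·)), z ≠ 1 → ‖z‖ < 1)
    (hsimple : (Matrix.charpoly (B.map (Complex.ofReal ·))).rootMultiplicity 1 = 1)
    (hC : |vstar ⬝ᵥ C.mulVec v| > 1) :
    ∃ R : ℕ, ∀ r ≥ R, ∃ μ : ℝ,
      ((μ : ℂ) ∈ spectrum ℂ (((B ^ r * C).map (Complex.ofReal ·)))) ∧ 1 < |μ| :=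
  eventually_spectral_radius_gt_one_general B C v vstar hv hvstar hnormal hlead hsimple hC
end

section
/- Let M = {A_1,…,A_m} be a family of linear operators sharing an invariant closed convex pointed cone K ⊂ R^d with nonempty interior. If there is an antinorm f on K and a constant λ ≥ 0 with f(A_i x) ≥ λ f(x) for all x ∈ K and all i, then the lower spectral radius satisfies ρ̌(M) ≥ λ. -/
open Filter Topology

/-- The product of length `k` of operators from the family `A`. -/
noncomputable def prodCLM {E : Type*} [NormedAddCommGroup E] [NormedSpace ℝ E] {m : ℕ}
    (A : Fin m → E →L[ℝ] E) (k : ℕ) (w : Fin k → Fin m) : E →L[ℝ] E :=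
  (List.ofFn fun i => A (w i)).prod

/-!
If `e ∈ K` has `f e > 0`, then every product `B` of length `k` keeps `e` in `K` and satisfies
`λ^k f(e) ≤ f(B e) ≤ C ‖B e‖ ≤ C ‖B‖ ‖e‖`, where `f ≤ C ‖·‖` on `K` by compactness of the unit
sphere of `K`. Hence `min_B ‖B‖ ≥ c λ^k` with `c > 0`, and taking `k`-th roots gives `ρ̌ ≥ λ`.
-/

section Cone

variable {E : Type*} [NormedAddCommGroup E] [NormedSpace ℝ E]

theorem exists_le_mul_norm_of_continuousOn [ProperSpace E] {K : Set E} (hK : IsClosed K)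
    (hK_cone : ∀ x ∈ K, ∀ t : ℝ, 0 ≤ t → t • x ∈ K) {f : E → ℝ} (hf : ContinuousOn f K)
    (hf_hom : ∀ x ∈ K, ∀ t : ℝ, 0 ≤ t → f (t • x) = t * f x) :
    ∃ C, 0 ≤ C ∧ ∀ x ∈ K, f x ≤ C * ‖x‖ := by
  obtain ⟨C, hC⟩ := ((isCompact_sphere (0 : E) 1).inter_left hK).bddAbove_image
    (hf.mono Set.inter_subset_left)
  refine ⟨max C 0, le_max_right _ _, fun x hx => ?_⟩
  rcases eq_or_ne x 0 with rfl | hx0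
  · simpa using (hf_hom 0 hx 0 le_rfl).le
  have hnx : 0 < ‖x‖ := norm_pos_iff.mpr hx0
  have hunit : ‖x‖⁻¹ • x ∈ K ∩ Metric.sphere 0 1 :=
    ⟨hK_cone x hx _ (inv_nonneg.mpr hnx.le), by simp [norm_smul, hnx.ne']⟩
  have hle : ‖x‖⁻¹ * f x ≤ max C 0 := by
    rw [← hf_hom x hx _ (inv_nonneg.mpr hnx.le)]
    exact (hC ⟨_, hunit, rfl⟩).trans (le_max_left _ _)
  rwa [inv_mul_le_iff₀ hnx, mul_comm] at hle

end Cone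

section Products

variable {E : Type*} [NormedAddCommGroup E] [NormedSpace ℝ E] {m : ℕ} (A : Fin m → E →L[ℝ] E)

theorem prodCLM_succ (k : ℕ) (w : Fin (k + 1) → Fin m) :
    prodCLM A (k + 1) w = A (w 0) * prodCLM A k (w ∘ Fin.succ) := by
  simp only [prodCLM, List.ofFn_succ, List.prod_cons]
  rfl

variable {K : Set E} (hK_inv : ∀ i, ∀ x ∈ K, A i x ∈ K)
include hK_inv

theorem prodCLM_mem {x : E} (hx : x ∈ K) : ∀ k w, prodCLM A k w x ∈ K
  | 0, _ => by simpa [prodCLM] using hx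
  | k + 1, w => by
    rw [prodCLM_succ]
    exact hK_inv _ _ (prodCLM_mem hx k _)

theorem pow_mul_le_prodCLM {f : E → ℝ} {lam : ℝ} (hlam : 0 ≤ lam)
    (hext : ∀ i, ∀ x ∈ K, lam * f x ≤ f (A i x)) {x : E} (hx : x ∈ K) :
    ∀ k w, lam ^ k * f x ≤ f (prodCLM A k w x)
  | 0, _ => by simp [prodCLM]
  | k + 1, w => by
    rw [prodCLM_succ]
    calc lam ^ (k + 1) * f x = lam * (lam ^ k * f x) := by ring
      _ ≤ lam * f (prodCLM A k (w ∘ Fin.succ) x) :=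
          mul_le_mul_of_nonneg_left (pow_mul_le_prodCLM hlam hext hx k _) hlam
      _ ≤ f (A (w 0) (prodCLM A k (w ∘ Fin.succ) x)) :=
          hext _ _ (prodCLM_mem A hK_inv hx k _)

theorem exists_pos_mul_pow_le_norm_prodCLM {f : E → ℝ} {lam C : ℝ} (hlam : 0 ≤ lam)
    (hext : ∀ i, ∀ x ∈ K, lam * f x ≤ f (A i x)) (hC : 0 ≤ C) (hfC : ∀ x ∈ K, f x ≤ C * ‖x‖)
    {e : E} (he : e ∈ K) (hfe : 0 < f e) :
    ∃ c, 0 < c ∧ ∀ k w, c * lam ^ k ≤ ‖prodCLM A k w‖ := by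
  have hCe : 0 < C * ‖e‖ := hfe.trans_le (hfC e he)
  refine ⟨f e / (C * ‖e‖), div_pos hfe hCe, fun k w => ?_⟩
  rw [div_mul_eq_mul_div, div_le_iff₀ hCe]
  calc f e * lam ^ k = lam ^ k * f e := mul_comm _ _
    _ ≤ f (prodCLM A k w e) := pow_mul_le_prodCLM A hK_inv hlam hext he k w
    _ ≤ C * ‖prodCLM A k w e‖ := hfC _ (prodCLM_mem A hK_inv he k w)
    _ ≤ C * (‖prodCLM A k w‖ * ‖e‖) := mul_le_mul_of_nonneg_left ((prodCLM A k w).le_opNorm e) hC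
    _ = ‖prodCLM A k w‖ * (C * ‖e‖) := by ring

end Products

theorem le_of_tendsto_rpow_one_div_of_mul_pow_le {u : ℕ → ℝ} {c lam ρ : ℝ} (hc : 0 < c)
    (hlam : 0 ≤ lam) (hu : ∀ k, c * lam ^ k ≤ u k)
    (hlim : Tendsto (fun k : ℕ => u k ^ ((1 : ℝ) / k)) atTop (𝓝 ρ)) : lam ≤ ρ := by
  have hroot : Tendsto (fun k : ℕ => c ^ ((1 : ℝ) / k) * lam) atTop (𝓝 lam) := by
    have := ((Real.continuousAt_const_rpow hc.ne').tendsto.comp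
      tendsto_one_div_atTop_nhds_zero_nat).mul_const lam
    simpa [Function.comp_def] using this
  refine le_of_tendsto_of_tendsto hroot hlim ?_
  filter_upwards [eventually_ne_atTop 0] with k hk
  calc c ^ ((1 : ℝ) / k) * lam = (c * lam ^ k) ^ ((1 : ℝ) / k) := by
        rw [Real.mul_rpow hc.le (pow_nonneg hlam k), ← Real.rpow_natCast lam k,
          ← Real.rpow_mul hlam, mul_one_div_cancel (Nat.cast_ne_zero.mpr hk), Real.rpow_one]
    _ ≤ u k ^ ((1 : ℝ) / k) := Real.rpow_le_rpow (by positivity) (hu k) (by positivity)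

theorem antinorm_lower_bound_for_lsr_general
    {d m : ℕ} (hm : 0 < m)
    (A : Fin m → (EuclideanSpace ℝ (Fin d) →L[ℝ] EuclideanSpace ℝ (Fin d)))
    (K : Set (EuclideanSpace ℝ (Fin d)))
    (hK_closed : IsClosed K)
    (hK_cone : ∀ x ∈ K, ∀ t : ℝ, 0 ≤ t → t • x ∈ K)
    (hK_inv : ∀ i : Fin m, ∀ x ∈ K, A i x ∈ K)
    (f : EuclideanSpace ℝ (Fin d) → ℝ)
    (hf_cont : ContinuousOn f K)
    (hf_nonneg : ∀ x ∈ K, 0 ≤ f x)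
    (hf_ne : ∃ x ∈ K, f x ≠ 0)
    (hf_hom : ∀ x ∈ K, ∀ t : ℝ, 0 ≤ t → f (t • x) = t * f x)
    (lam : ℝ) (hlam : 0 ≤ lam)
    (hext : ∀ i : Fin m, ∀ x ∈ K, lam * f x ≤ f (A i x))
    (ρcheck : ℝ)
    (hlsr : Tendsto (fun k : ℕ => (⨅ w : Fin k → Fin m, ‖prodCLM A k w‖) ^ ((1 : ℝ) / k))
      atTop (𝓝 ρcheck)) :
    lam ≤ ρcheck := by
  have : Nonempty (Fin m) := Fin.pos_iff_nonempty.mp hm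
  obtain ⟨e, he, hfe⟩ := hf_ne
  obtain ⟨C, hC, hfC⟩ := exists_le_mul_norm_of_continuousOn hK_closed hK_cone hf_cont hf_hom
  obtain ⟨c, hc, hnorm⟩ := exists_pos_mul_pow_le_norm_prodCLM A hK_inv hlam hext hC hfC he
    ((hf_nonneg e he).lt_of_ne' hfe)
  exact le_of_tendsto_rpow_one_div_of_mul_pow_le hc hlam (fun k => le_ciInf (hnorm k)) hlsr

/-- if the operators of `M = {A_1,…,A_m}` share an invariant closed convex
pointed cone `K` with nonempty interior, and there are an antinorm `f` on `K` and
`λ ≥ 0` with `f (A_i x) ≥ λ f x` on `K`, then the lower spectral radius satisfies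
`ρ̌(M) ≥ λ`. -/
theorem antinorm_lower_bound_for_lsr
    {d m : ℕ} (hm : 0 < m)
    (A : Fin m → (EuclideanSpace ℝ (Fin d) →L[ℝ] EuclideanSpace ℝ (Fin d)))
    (K : Set (EuclideanSpace ℝ (Fin d)))
    (hK_closed : IsClosed K) (hK_conv : Convex ℝ K)
    (hK_cone : ∀ x ∈ K, ∀ t : ℝ, 0 ≤ t → t • x ∈ K)
    (hK_pointed : ∀ x ∈ K, -x ∈ K → x = 0)
    (hK_int : (interior K).Nonempty)
    (hK_inv : ∀ i : Fin m, ∀ x ∈ K, A i x ∈ K)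
    (f : EuclideanSpace ℝ (Fin d) → ℝ)
    (hf_cont : ContinuousOn f K)
    (hf_nonneg : ∀ x ∈ K, 0 ≤ f x)
    (hf_ne : ∃ x ∈ K, f x ≠ 0)
    (hf_conc : ConcaveOn ℝ K f)
    (hf_hom : ∀ x ∈ K, ∀ t : ℝ, 0 ≤ t → f (t • x) = t * f x)
    (lam : ℝ) (hlam : 0 ≤ lam)
    (hext : ∀ i : Fin m, ∀ x ∈ K, lam * f x ≤ f (A i x))
    (ρcheck : ℝ)
    (hlsr : Tendsto (fun k : ℕ => (⨅ w : Fin k → Fin m, ‖prodCLM A k w‖) ^ ((1 : ℝ) / k))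
      atTop (𝓝 ρcheck)) :
    lam ≤ ρcheck :=
  antinorm_lower_bound_for_lsr_general hm A K hK_closed hK_cone hK_inv f hf_cont hf_nonneg hf_ne
    hf_hom lam hlam hext ρcheck hlsr
end

section
/- A finite family of nonnegative d×d matrices is eventually positive (there exists k such that all products of length r ≥ k are entrywise positive) if and only if no matrix of the family has a zero row or a zero column, and there exists k such that all products of length exactly k are entrywise positive. -/
/-- The product of length `k` of matrices from the family `A`. -/
noncomputable def prodMat {d m : ℕ} (A : Fin m → Matrix (Fin d) (Fin d) ℝ)
    (k : ℕ) (w : Fin k → Fin m) : Matrix (Fin d) (Fin d) ℝ :=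
  (List.ofFn fun i => A (w i)).prod

/-!
A positive product of length `k + 1` that starts (ends) with `Aᵢ` forces `Aᵢ` to have no zero row
(column). Conversely, a nonnegative matrix with no zero row has a positive entry in every row, a
property stable under products; so for `r ≥ k` a product of length `r` is a product with a positive
entry in every row followed by a positive product of length `k`, hence is positive.
-/

namespace Matrix

section Semiring

variable {l m n R : Type*} [Fintype m] [NonUnitalNonAssocSemiring R]

lemma exists_apply_ne_zero_of_mul_apply_ne_zero_left {P : Matrix l m R} {Q : Matrix m n R}
    {i : l} {k : n} (h : (P * Q) i k ≠ 0) : ∃ j, P i j ≠ 0 := by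
  obtain ⟨j, -, hj⟩ := Finset.exists_ne_zero_of_sum_ne_zero h
  exact ⟨j, left_ne_zero_of_mul hj⟩

lemma exists_apply_ne_zero_of_mul_apply_ne_zero_right {P : Matrix l m R} {Q : Matrix m n R}
    {i : l} {k : n} (h : (P * Q) i k ≠ 0) : ∃ j, Q j k ≠ 0 := by
  obtain ⟨j, -, hj⟩ := Finset.exists_ne_zero_of_sum_ne_zero h
  exact ⟨j, right_ne_zero_of_mul hj⟩

end Semiring

section Order

variable {m n R : Type*} [Zero R] [PartialOrder R]

/-- Nonnegative with a positive entry in every row ("row-allowable"). -/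
def IsRowAllowable (M : Matrix m n R) : Prop :=
  (∀ i j, 0 ≤ M i j) ∧ ∀ i, ∃ j, 0 < M i j

lemma isRowAllowable_of_nonneg {M : Matrix m n R} (hM : ∀ i j, 0 ≤ M i j)
    (hrow : ∀ i, ∃ j, M i j ≠ 0) : IsRowAllowable M :=
  ⟨hM, fun i => (hrow i).imp fun j hj => (hM i j).lt_of_ne' hj⟩

end Order

section OrderedSemiring

variable {l m n R : Type*} [Semiring R] [PartialOrder R] [IsStrictOrderedRing R]

lemma isRowAllowable_one [DecidableEq m] : IsRowAllowable (1 : Matrix m m R) :=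
  ⟨fun i j => by by_cases h : i = j <;> simp [one_apply, h], fun i => ⟨i, by simp⟩⟩

variable [Fintype m]

lemma mul_apply_pos_of_nonneg {P : Matrix l m R} {Q : Matrix m n R} (hP : ∀ i j, 0 ≤ P i j)
    (hQ : ∀ i j, 0 ≤ Q i j) {i : l} {j : m} {k : n} (hij : 0 < P i j) (hjk : 0 < Q j k) :
    0 < (P * Q) i k :=
  calc 0 < P i j * Q j k := mul_pos hij hjk
    _ ≤ ∑ t, P i t * Q t k :=
      Finset.single_le_sum (fun t _ => mul_nonneg (hP i t) (hQ t k)) (Finset.mem_univ j)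

lemma mul_apply_pos_of_isRowAllowable_of_pos {P : Matrix l m R} {Q : Matrix m n R}
    (hP : IsRowAllowable P) (hQ : ∀ i j, 0 < Q i j) (i : l) (k : n) : 0 < (P * Q) i k :=
  have ⟨_, hij⟩ := hP.2 i
  mul_apply_pos_of_nonneg hP.1 (fun i j => (hQ i j).le) hij (hQ _ k)

lemma IsRowAllowable.mul {P : Matrix l m R} {Q : Matrix m n R} (hP : IsRowAllowable P)
    (hQ : IsRowAllowable Q) : IsRowAllowable (P * Q) := by
  refine ⟨fun i k => Finset.sum_nonneg fun t _ => mul_nonneg (hP.1 i t) (hQ.1 t k), fun i => ?_⟩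
  obtain ⟨j, hij⟩ := hP.2 i
  obtain ⟨k, hjk⟩ := hQ.2 j
  exact ⟨k, mul_apply_pos_of_nonneg hP.1 hQ.1 hij hjk⟩

lemma isRowAllowable_list_prod [DecidableEq m] {L : List (Matrix m m R)}
    (h : ∀ M ∈ L, IsRowAllowable M) : IsRowAllowable L.prod :=
  L.prod_induction _ (fun _ _ => IsRowAllowable.mul) isRowAllowable_one h

end OrderedSemiring

end Matrix

open Matrix

section prodMat

variable {d m : ℕ} (A : Fin m → Matrix (Fin d) (Fin d) ℝ)

lemma prodMat_one (w : Fin 1 → Fin m) : prodMat A 1 w = A (w 0) := by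
  simp [prodMat]

lemma prodMat_add (a k : ℕ) (w : Fin (a + k) → Fin m) :
    prodMat A (a + k) w =
      prodMat A a (fun i => w (Fin.castAdd k i)) * prodMat A k (fun i => w (Fin.natAdd a i)) := by
  simp only [prodMat, List.ofFn_add, List.prod_append]
  rfl

lemma isRowAllowable_prodMat (hA : ∀ i, IsRowAllowable (A i)) (k : ℕ) (w : Fin k → Fin m) :
    IsRowAllowable (prodMat A k w) :=
  isRowAllowable_list_prod fun M hM => by
    obtain ⟨i, rfl⟩ := List.mem_ofFn.mp hM
    exact hA _

end prodMat

/-- a finite family of nonnegative matrices is eventually positive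
(all products of length `r ≥ k` are entrywise positive, for some `k`) if and only if no
matrix of the family has a zero row or a zero column, and there is a `k` such that all
products of length exactly `k` are entrywise positive. -/
theorem eventually_positive_iff
    {d m : ℕ} (A : Fin m → Matrix (Fin d) (Fin d) ℝ)
    (hnonneg : ∀ i p q, 0 ≤ A i p q) :
    (∃ k : ℕ, ∀ r : ℕ, k ≤ r → ∀ w : Fin r → Fin m, ∀ p q, 0 < prodMat A r w p q) ↔
      ((∀ i, (∀ p, ∃ q, A i p q ≠ 0) ∧ (∀ q, ∃ p, A i p q ≠ 0)) ∧
        ∃ k : ℕ, ∀ w : Fin k → Fin m, ∀ p q, 0 < prodMat A k w p q) := by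
  constructor
  · rintro ⟨k, hk⟩
    refine ⟨fun i => ⟨fun p => ?_, fun q => ?_⟩, k, hk k le_rfl⟩
    · have h := (hk (1 + k) (by omega) (fun _ => i) p p).ne'
      rw [prodMat_add, prodMat_one] at h
      exact exists_apply_ne_zero_of_mul_apply_ne_zero_left h
    · have h := (hk (k + 1) (by omega) (fun _ => i) q q).ne'
      rw [prodMat_add, prodMat_one] at h
      exact exists_apply_ne_zero_of_mul_apply_ne_zero_right h
  · rintro ⟨hA, k, hk⟩
    have hrow i := isRowAllowable_of_nonneg (hnonneg i) (hA i).1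
    refine ⟨k, fun r hr w p q => ?_⟩
    obtain ⟨a, rfl⟩ := Nat.exists_eq_add_of_le' hr
    rw [prodMat_add]
    exact mul_apply_pos_of_isRowAllowable_of_pos (isRowAllowable_prodMat A hrow _ _) (hk _) p q
end

section
/- If a finite family M of nonnegative d×d matrices is eventually positive, then M possesses a second invariant cone: there exists a closed convex pointed cone K̃ with K̃ \ {0} ⊂ int(R^d_+) such that A_i K̃ ⊆ K̃ for every A_i ∈ M. -/
/-!
Fix `k` such that all products of length at least `k` are positive. Since there are finitely
many products of length `k`, one constant `C` bounds all ratios `P p j / P q j` of entries in a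
common column of such a product `P`; hence every product of length at least `k`, written as a
product of length `k` followed by a nonnegative one, maps the nonnegative orthant into the
closed convex cone `L = {x ≥ 0 | x p ≤ C x q for all p q}`, which meets the boundary of the
orthant only at `0`. The required cone is the set of `x` all of whose images under products lie
in `L`: the largest invariant subset of `L`. It contains `P *ᵥ 1` for every product `P` of
length `k`.
-/

open Matrix

open Filter Set

theorem Matrix.mulVec_nonneg {R m n : Type*} [Semiring R] [PartialOrder R] [IsOrderedRing R]
    [Fintype n] {M : Matrix m n R} (hM : ∀ p q, 0 ≤ M p q) {v : n → R} (hv : 0 ≤ v) :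
    0 ≤ M *ᵥ v :=
  fun p => Finset.sum_nonneg fun q _ => mul_nonneg (hM p q) (hv q)

theorem Matrix.mulVec_one_ne_zero {m n : Type*} [Fintype n] [Nonempty m] [Nonempty n]
    {M : Matrix m n ℝ} (hM : ∀ p q, 0 < M p q) : M *ᵥ 1 ≠ 0 := by
  obtain ⟨p⟩ := ‹Nonempty m›
  refine Function.ne_iff.2 ⟨p, ?_⟩
  simpa [mulVec, dotProduct] using
    (Finset.sum_pos (fun q _ => hM p q) Finset.univ_nonempty).ne'

theorem eventually_entry_le_const_mul_entry {ι n : Type*} [Finite ι] [Finite n]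
    (P : ι → Matrix n n ℝ) (hP : ∀ i p q, 0 < P i p q) :
    ∀ᶠ C in atTop, ∀ i p q j, P i p j ≤ C * P i q j := by
  simp only [eventually_all]
  intro i p q j
  filter_upwards [eventually_ge_atTop (P i p j / P i q j)] with C hC
  exact (div_le_iff₀ (hP i q j)).1 hC

section RatioCone

variable {n : Type*}

def ratioCone (C : ℝ) : Set (n → ℝ) :=
  {x | 0 ≤ x ∧ ∀ p q, x p ≤ C * x q}

theorem isClosed_ratioCone (C : ℝ) : IsClosed (ratioCone (n := n) C) := by
  simp only [ratioCone, ofPred_and, ofPred_forall]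
  exact isClosed_Ici.inter <| isClosed_iInter fun p => isClosed_iInter fun q =>
    isClosed_le (continuous_apply p) (continuous_const.mul (continuous_apply q))

theorem convex_ratioCone (C : ℝ) : Convex ℝ (ratioCone (n := n) C) := by
  rintro x ⟨hx0, hx⟩ y ⟨hy0, hy⟩ a b ha hb -
  refine ⟨add_nonneg (smul_nonneg ha hx0) (smul_nonneg hb hy0), fun p q => ?_⟩
  simp only [Pi.add_apply, Pi.smul_apply, smul_eq_mul]
  calc a * x p + b * y p ≤ a * (C * x q) + b * (C * y q) :=
        add_le_add (mul_le_mul_of_nonneg_left (hx p q) ha) (mul_le_mul_of_nonneg_left (hy p q) hb)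
    _ = C * (a * x q + b * y q) := by ring

theorem smul_mem_ratioCone {C : ℝ} {x : n → ℝ} (hx : x ∈ ratioCone C) {t : ℝ} (ht : 0 ≤ t) :
    t • x ∈ ratioCone C :=
  ⟨smul_nonneg ht hx.1, fun p q => by
    simpa [mul_left_comm t C] using mul_le_mul_of_nonneg_left (hx.2 p q) ht⟩

theorem one_mem_ratioCone {C : ℝ} (hC : 1 ≤ C) : (1 : n → ℝ) ∈ ratioCone C :=
  ⟨zero_le_one, fun _ _ => by simpa using hC⟩

theorem eq_zero_of_mem_ratioCone_of_neg_mem {C : ℝ} {x : n → ℝ} (hx : x ∈ ratioCone C)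
    (hnx : -x ∈ ratioCone C) : x = 0 :=
  le_antisymm (neg_nonneg.1 hnx.1) hx.1

theorem pos_of_mem_ratioCone {C : ℝ} {x : n → ℝ} (hx : x ∈ ratioCone C) (hx0 : x ≠ 0) (p : n) :
    0 < x p := by
  obtain ⟨q, hq⟩ := Function.ne_iff.1 hx0
  have hq : 0 < x q := (hx.1 q).lt_of_ne' hq
  refine (hx.1 p).lt_of_ne' fun hp => ?_
  have := hx.2 q p
  rw [hp, Pi.zero_apply, mul_zero] at this
  exact this.not_gt hq

theorem ratioCone_diff_zero_subset_interior [Finite n] (C : ℝ) :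
    ratioCone C \ {0} ⊆ interior {x : n → ℝ | ∀ p, 0 ≤ x p} := by
  rintro x ⟨hx, hx0⟩
  refine mem_interior_iff_mem_nhds.2 (mem_of_superset
    (set_pi_mem_nhds finite_univ fun p _ => Ioi_mem_nhds (pos_of_mem_ratioCone hx hx0 p))
    fun y hy p => le_of_lt (hy p (mem_univ p)))

theorem mulVec_mem_ratioCone [Fintype n] {C : ℝ} {P : Matrix n n ℝ}
    (hP : ∀ p q j, P p j ≤ C * P q j) (hP0 : ∀ p j, 0 ≤ P p j) {v : n → ℝ} (hv : 0 ≤ v) :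
    P *ᵥ v ∈ ratioCone C := by
  refine ⟨mulVec_nonneg hP0 hv, fun p q => ?_⟩
  calc (P *ᵥ v) p = ∑ j, P p j * v j := rfl
    _ ≤ ∑ j, C * P q j * v j :=
      Finset.sum_le_sum fun j _ => mul_le_mul_of_nonneg_right (hP p q j) (hv j)
    _ = C * (P *ᵥ v) q := by simp [mulVec, dotProduct, Finset.mul_sum, mul_assoc]

end RatioCone

section Products

variable {d m : ℕ} (A : Fin m → Matrix (Fin d) (Fin d) ℝ)

theorem prodMat_zero (w : Fin 0 → Fin m) : prodMat A 0 w = 1 := rfl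

theorem prodMat_succ (r : ℕ) (w : Fin (r + 1) → Fin m) :
    prodMat A (r + 1) w = prodMat A r (Fin.init w) * A (w (Fin.last r)) := by
  rw [prodMat, List.ofFn_succ', List.prod_concat]
  rfl

theorem prodMat_append {r s : ℕ} (u : Fin r → Fin m) (w : Fin s → Fin m) :
    prodMat A (r + s) (Fin.append u w) = prodMat A r u * prodMat A s w := by
  simp [prodMat, List.ofFn_add, List.prod_append]

theorem prodMat_mulVec_nonneg (hA : ∀ i p q, 0 ≤ A i p q) (r : ℕ) (w : Fin r → Fin m)
    {v : Fin d → ℝ} (hv : 0 ≤ v) : 0 ≤ prodMat A r w *ᵥ v := by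
  induction r generalizing v with
  | zero => simpa [prodMat_zero] using hv
  | succ r ih =>
    rw [prodMat_succ, ← mulVec_mulVec]
    exact ih _ (mulVec_nonneg (hA _) hv)

end Products

section InvariantCore

variable {d m : ℕ} (A : Fin m → Matrix (Fin d) (Fin d) ℝ) {L : Set (Fin d → ℝ)}

def invariantCore (A : Fin m → Matrix (Fin d) (Fin d) ℝ) (L : Set (Fin d → ℝ)) :
    Set (Fin d → ℝ) :=
  {x | ∀ r (w : Fin r → Fin m), prodMat A r w *ᵥ x ∈ L}

theorem isClosed_invariantCore (hL : IsClosed L) : IsClosed (invariantCore A L) := by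
  simp only [invariantCore, ofPred_forall]
  exact isClosed_iInter fun r => isClosed_iInter fun w =>
    hL.preimage (continuous_const.matrix_mulVec continuous_id)

theorem convex_invariantCore (hL : Convex ℝ L) : Convex ℝ (invariantCore A L) := by
  simp only [invariantCore, ofPred_forall]
  exact convex_iInter fun r => convex_iInter fun w => hL.linear_preimage (prodMat A r w).mulVecLin

theorem invariantCore_subset : invariantCore A L ⊆ L :=
  fun x hx => by simpa [prodMat_zero] using hx 0 Fin.elim0

theorem invariantCore_eq_self [IsEmpty (Fin m)] : invariantCore A L = L := by
  refine (invariantCore_subset A).antisymm fun x hx r w => ?_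
  cases r with
  | zero => simpa [prodMat_zero] using hx
  | succ r => exact isEmptyElim (w 0)

theorem smul_mem_invariantCore (hL : ∀ x ∈ L, ∀ t : ℝ, 0 ≤ t → t • x ∈ L) {x : Fin d → ℝ}
    (hx : x ∈ invariantCore A L) {t : ℝ} (ht : 0 ≤ t) : t • x ∈ invariantCore A L :=
  fun r w => by simpa [mulVec_smul] using hL _ (hx r w) t ht

theorem mulVec_mem_invariantCore (i : Fin m) {x : Fin d → ℝ} (hx : x ∈ invariantCore A L) :
    A i *ᵥ x ∈ invariantCore A L :=
  fun r w => by simpa [prodMat_succ, ← mulVec_mulVec] using hx (r + 1) (Fin.snoc w i)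

theorem prodMat_mulVec_mem_invariantCore {k : ℕ} {v : Fin d → ℝ}
    (h : ∀ r, k ≤ r → ∀ w : Fin r → Fin m, prodMat A r w *ᵥ v ∈ L) (w : Fin k → Fin m) :
    prodMat A k w *ᵥ v ∈ invariantCore A L :=
  fun r u => by
    rw [mulVec_mulVec, ← prodMat_append]
    exact h _ (Nat.le_add_left k r) _

end InvariantCore

/-- an eventually positive finite family of nonnegative matrices possesses a
second invariant cone: a nontrivial closed convex pointed cone `K̃` with
`K̃ \ {0} ⊆ int (ℝ^d₊)`, invariant under every matrix of the family. -/
theorem eventually_positive_has_second_invariant_cone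
    {d m : ℕ} (hd : 0 < d)
    (A : Fin m → Matrix (Fin d) (Fin d) ℝ)
    (hnonneg : ∀ i p q, 0 ≤ A i p q)
    (hevpos : ∃ k : ℕ, ∀ r : ℕ, k ≤ r → ∀ w : Fin r → Fin m, ∀ p q, 0 < prodMat A r w p q) :
    ∃ Kt : Set (Fin d → ℝ),
      IsClosed Kt ∧ Convex ℝ Kt ∧
      (∀ x ∈ Kt, ∀ t : ℝ, 0 ≤ t → t • x ∈ Kt) ∧
      (∀ x ∈ Kt, -x ∈ Kt → x = 0) ∧
      (∃ x ∈ Kt, x ≠ 0) ∧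
      (Kt \ {0} ⊆ interior {x : Fin d → ℝ | ∀ p, 0 ≤ x p}) ∧
      (∀ i : Fin m, ∀ x ∈ Kt, (A i).mulVec x ∈ Kt) := by
  have : Nonempty (Fin d) := Fin.pos_iff_nonempty.1 hd
  obtain ⟨k, hk⟩ := hevpos
  obtain ⟨C, hC, hC1⟩ := ((eventually_entry_le_const_mul_entry (prodMat A k)
    (hk k le_rfl)).and (eventually_ge_atTop 1)).exists
  have hmaps : ∀ r, k ≤ r → ∀ w v, 0 ≤ v → prodMat A r w *ᵥ v ∈ ratioCone C := by
    intro r hr w v hv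
    obtain ⟨s, rfl⟩ := Nat.exists_eq_add_of_le hr
    rw [← Fin.append_castAdd_natAdd (f := w), prodMat_append, ← mulVec_mulVec]
    exact mulVec_mem_ratioCone (hC _) (fun p q => (hk k le_rfl _ p q).le)
      (prodMat_mulVec_nonneg A hnonneg _ _ hv)
  refine ⟨invariantCore A (ratioCone C), isClosed_invariantCore A (isClosed_ratioCone C),
    convex_invariantCore A (convex_ratioCone C),
    fun x hx t ht => smul_mem_invariantCore A (fun y hy t ht => smul_mem_ratioCone hy ht) hx ht,
    fun x hx hnx => eq_zero_of_mem_ratioCone_of_neg_mem (invariantCore_subset A hx)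
      (invariantCore_subset A hnx), ?_,
    (sdiff_subset_sdiff_left (invariantCore_subset A)).trans (ratioCone_diff_zero_subset_interior C),
    fun i x hx => mulVec_mem_invariantCore A i hx⟩
  rcases isEmpty_or_nonempty (Fin m) with _ | ⟨⟨i⟩⟩
  · exact ⟨1, (invariantCore_eq_self A).symm ▸ one_mem_ratioCone hC1, one_ne_zero⟩
  · exact ⟨_, prodMat_mulVec_mem_invariantCore A (fun r hr w => hmaps r hr w 1 zero_le_one)
      fun _ => i, mulVec_one_ne_zero (hk k le_rfl _)⟩
end

section
/- If a family M̃ of matrices with joint spectral radius 1 admits an invariant norm (max_j ||Ã_j x|| = ||x|| for all x), and P is a convex body with Ã_j P ⊆ P for all j such that some product Π̃ of the Ã_j has spectral radius 1 with leading eigenvector v on the boundary of P, then for every eigenvector u of Π̃ not proportional to v with corresponding eigenvalue μ, if the one-dimensional (or two-dimensional, in the complex conjugate case) invariant subspace U spanned by u satisfies Π̃(P ∩ U) ⊂ int_U(P ∩ U), then |μ| < 1. -/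
open Filter Topology

theorem Convex.zero_mem_interior_of_neg_mem {E : Type*} [AddCommGroup E] [Module ℝ E]
    [TopologicalSpace E] [IsTopologicalAddGroup E] [ContinuousConstSMul ℝ E] {s : Set E}
    (hs : Convex ℝ s) (hneg : ∀ x ∈ s, -x ∈ s) (hint : (interior s).Nonempty) :
    (0 : E) ∈ interior s := by
  obtain ⟨x, hx⟩ := hint
  simpa using hs.combo_interior_self_mem_interior hx (hneg x (interior_subset hx))
    (by norm_num : (0 : ℝ) < 1 / 2) (by norm_num : (0 : ℝ) ≤ 1 / 2) (by norm_num)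

theorem exists_pos_smul_mem_of_mem_nhds_zero {E : Type*} [AddCommGroup E] [Module ℝ E]
    [TopologicalSpace E] [ContinuousSMul ℝ E] {s : Set E} (hs : s ∈ 𝓝 (0 : E)) (x : E) :
    ∃ t : ℝ, 0 < t ∧ t • x ∈ s := by
  have hcont : Tendsto (fun t : ℝ => t • x) (𝓝 0) (𝓝 0) :=
    (continuous_id.smul continuous_const).tendsto' 0 0 (zero_smul ℝ x)
  obtain ⟨t, hts, ht⟩ :=
    ((hcont.eventually hs).filter_mono nhdsWithin_le_nhds |>.and
      (self_mem_nhdsWithin : Set.Ioi (0 : ℝ) ∈ 𝓝[>] 0)).exists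
  exact ⟨t, ht, hts⟩

theorem eventually_smul_mem_of_smul_mem_intrinsicInterior {E : Type*} [AddCommGroup E]
    [Module ℝ E] [TopologicalSpace E] [ContinuousSMul ℝ E] {s : Set E} {a : ℝ} {d : E}
    (had : a • d ∈ intrinsicInterior ℝ s) (hd : d ∈ (affineSpan ℝ s).direction) :
    ∀ᶠ t in 𝓝 a, t • d ∈ s := by
  obtain ⟨z, hz, hza⟩ := had
  have hmem : ∀ t : ℝ, t • d ∈ affineSpan ℝ s := fun t => by
    simpa [hza, ← add_smul] using
      AffineSubspace.vadd_mem_of_mem_direction ((affineSpan ℝ s).direction.smul_mem (t - a) hd) z.2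
  let g : ℝ → affineSpan ℝ s := fun t => ⟨t • d, hmem t⟩
  have hgc : Continuous g := continuous_induced_rng.2 (continuous_id.smul continuous_const)
  have hga : g a = z := Subtype.ext hza.symm
  filter_upwards [hgc.continuousAt.preimage_mem_nhds (isOpen_interior.mem_nhds (hga ▸ hz))]
    with t ht
  exact interior_subset (s := Subtype.val ⁻¹' s) ht

theorem lt_of_mem_upperBounds_of_mem_nhds {α : Type*} [LinearOrder α] [TopologicalSpace α]
    [OrderTopology α] [DenselyOrdered α] [NoMaxOrder α] {s : Set α} {a b : α}
    (hb : b ∈ upperBounds s) (hs : s ∈ 𝓝 a) : a < b := by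
  simpa [interior_Iic] using interior_mono (t := Set.Iic b) hb (mem_interior_iff_mem_nhds.2 hs)

theorem mem_nhds_neg_of_neg_mem {G : Type*} [TopologicalSpace G] [InvolutiveNeg G]
    [ContinuousNeg G] {s : Set G} {a : G} (hneg : ∀ x ∈ s, -x ∈ s) (hs : s ∈ 𝓝 a) :
    s ∈ 𝓝 (-a) :=
  mem_of_superset (continuous_neg.continuousAt.preimage_mem_nhds (by rwa [neg_neg]))
    fun x hx => by simpa using hneg _ hx

theorem mem_direction_affineSpan_of_smul_mem {k E : Type*} [Field k] [AddCommGroup E]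
    [Module k E] {s : Set E} {x : E} {t : k} (h0 : (0 : E) ∈ s) (hx : t • x ∈ s) (ht : t ≠ 0) :
    x ∈ (affineSpan k s).direction := by
  have htx : t • x ∈ (affineSpan k s).direction := by
    simpa using AffineSubspace.vsub_mem_direction (mem_affineSpan k hx) (mem_affineSpan k h0)
  simpa [ht] using (affineSpan k s).direction.smul_mem t⁻¹ htx

theorem strict_section_contraction_eigenvalue_lt_one_general
    {E : Type*} [NormedAddCommGroup E] [NormedSpace ℝ E]
    (P : Set E) (hP_comp : IsCompact P) (hP_conv : Convex ℝ P)
    (hP_symm : ∀ x ∈ P, -x ∈ P) (hP_int : (interior P).Nonempty)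
    (Pi : E →L[ℝ] E)
    (u : E) (hu0 : u ≠ 0) (μ : ℝ) (hu : Pi u = μ • u)
    (U : Submodule ℝ E) (hUu : u ∈ U)
    (h_strict : ∀ x ∈ P ∩ (U : Set E), Pi x ∈ intrinsicInterior ℝ (P ∩ (U : Set E))) :
    |μ| < 1 := by
  have h0 : (0 : E) ∈ interior P := hP_conv.zero_mem_interior_of_neg_mem hP_symm hP_int
  set S : Set ℝ := {t | t • u ∈ P}
  have hS_neg : ∀ t ∈ S, -t ∈ S := fun t ht => by simpa [S, neg_smul] using hP_symm _ ht
  obtain ⟨t₀, ht₀, ht₀S⟩ := exists_pos_smul_mem_of_mem_nhds_zero (mem_interior_iff_mem_nhds.1 h0) u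
  obtain ⟨T, hTS, hTmax⟩ :=
    ((isClosedEmbedding_smul_left hu0).isCompact_preimage hP_comp).exists_isGreatest ⟨t₀, ht₀S⟩
  have hT : 0 < T := ht₀.trans_le (hTmax ht₀S)
  have hTu : T • u ∈ P ∩ (U : Set E) := ⟨hTS, U.smul_mem T hUu⟩
  have hu_dir : u ∈ (affineSpan ℝ (P ∩ (U : Set E))).direction :=
    mem_direction_affineSpan_of_smul_mem ⟨interior_subset h0, U.zero_mem⟩ hTu hT.ne'
  have hS_nhds : S ∈ 𝓝 (T * μ) := by
    have h := h_strict _ hTu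
    rw [map_smul, hu, smul_smul] at h
    filter_upwards [eventually_smul_mem_of_smul_mem_intrinsicInterior h hu_dir] with t ht
    exact ht.1
  have hTμ : |T * μ| < T := abs_lt.2
    ⟨neg_lt.1 (lt_of_mem_upperBounds_of_mem_nhds hTmax (mem_nhds_neg_of_neg_mem hS_neg hS_nhds)),
      lt_of_mem_upperBounds_of_mem_nhds hTmax hS_nhds⟩
  rw [abs_mul, abs_of_pos hT] at hTμ
  exact (mul_lt_iff_lt_one_right hT).1 hTμ

/-- suppose the family `M̃` (of joint spectral radius `1`) admits an
invariant norm, `P` is an invariant convex body, `Π̃` is a product of the `Ã_j` with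
`Π̃ v = v` and leading eigenvector `v` on the boundary of `P`.  If `u` is an eigenvector
of `Π̃` not proportional to `v`, with eigenvalue `μ`, lying in an invariant subspace `U`,
and `Π̃` maps the section `P ∩ U` into its relative (intrinsic) interior, then `|μ| < 1`. -/
theorem strict_section_contraction_eigenvalue_lt_one
    {E : Type*} [NormedAddCommGroup E] [NormedSpace ℝ E] [FiniteDimensional ℝ E]
    {m : ℕ} (A : Fin m → E →L[ℝ] E)
    (h_invnorm : ∀ x : E, (⨆ j : Fin m, ‖A j x‖) = ‖x‖)
    (P : Set E) (hP_comp : IsCompact P) (hP_conv : Convex ℝ P)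
    (hP_symm : ∀ x ∈ P, -x ∈ P) (hP_int : (interior P).Nonempty)
    (hP_inv : ∀ j : Fin m, ∀ x ∈ P, A j x ∈ P)
    (Pi : E →L[ℝ] E) (hPi : ∃ k : ℕ, ∃ w : Fin k → Fin m, Pi = prodCLM A k w)
    (v : E) (hv0 : v ≠ 0) (hv : Pi v = v) (hv_bd : v ∈ frontier P)
    (u : E) (hu0 : u ≠ 0) (μ : ℝ) (hu : Pi u = μ • u)
    (h_uv : ∀ c : ℝ, u ≠ c • v)
    (U : Submodule ℝ E) (hUu : u ∈ U) (hU_inv : ∀ x ∈ U, Pi x ∈ U)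
    (h_strict : ∀ x ∈ P ∩ (U : Set E), Pi x ∈ intrinsicInterior ℝ (P ∩ (U : Set E))) :
    |μ| < 1 :=
  strict_section_contraction_eigenvalue_lt_one_general P hP_comp hP_conv hP_symm hP_int Pi u hu0 μ
    hu U hUu h_strict
end
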